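/- arXiv:2302.00849 — 3 statements merged into one kernel-verified Lean document; each statement's English description precedes it below -/
import Mathlib

section
/- Discrete Gronwall-type induction for heavy-ball error recursion: suppose nonnegative sequences (e_n) with e_0 = 0 satisfy ‖e_1 - e_0‖ ≤ c h³ and ‖e_{n+1} - e_n‖ ≤ β ‖e_n - e_{n-1}‖ + h c₁ ‖e_n‖ + c h³ for n ≥ 1, with 0 ≤ β < 1, h, c, c₁ > 0. Then with d₁ = c/c₁, d₂ = 2c₁/(1-β), d₃ = 2c/(1-β), one has ‖e_n‖ ≤ d₁ e^{d₂ h n} h² and ‖e_{n+1} - e_n‖ ≤ d₃ e^{d₂ h n} h³ for all n ≥ 0. -/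
/-- Discrete Gronwall-type induction for the heavy-ball error recursion. -/
theorem heavy_ball_global_error {d : ℕ} (β h c c₁ : ℝ)
    (hβ0 : 0 ≤ β) (hβ1 : β < 1) (hh : 0 < h) (hc : 0 < c) (hc₁ : 0 < c₁)
    (e : ℕ → EuclideanSpace ℝ (Fin d))
    (he0 : e 0 = 0)
    (he1 : ‖e 1 - e 0‖ ≤ c * h ^ 3)
    (hrec : ∀ n, 1 ≤ n →
      ‖e (n + 1) - e n‖ ≤ β * ‖e n - e (n - 1)‖ + h * c₁ * ‖e n‖ + c * h ^ 3) :
    ∀ n : ℕ,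
      ‖e n‖ ≤ (c / c₁) * Real.exp ((2 * c₁ / (1 - β)) * h * n) * h ^ 2 ∧
      ‖e (n + 1) - e n‖ ≤ (2 * c / (1 - β)) * Real.exp ((2 * c₁ / (1 - β)) * h * n) * h ^ 3 := by
  have h1β : 0 < 1 - β := by linarith
  have h1β' : (1 - β) ≠ 0 := h1β.ne'
  have hc₁' : c₁ ≠ 0 := hc₁.ne'
  have hh3 : 0 < h ^ 3 := by positivity
  intro n
  induction n with
  | zero =>
    constructor
    · simp [he0]; positivity
    · refine he1.trans ?_
      simp only [Nat.cast_zero, mul_zero, Real.exp_zero, mul_one]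
      rw [div_mul_eq_mul_div, le_div_iff₀ h1β]
      nlinarith [mul_pos hc hh3, mul_nonneg (mul_pos hc hh3).le hβ0]
  | succ n ih =>
    obtain ⟨ih1, ih2⟩ := ih
    have hD0 : 0 < 2 * c₁ / (1 - β) := by positivity
    set D := 2 * c₁ / (1 - β) with hD
    set E := Real.exp (D * h * n) with hE
    have hE1 : (1:ℝ) ≤ E := Real.one_le_exp (by positivity)
    have hE0 : (0:ℝ) < E := lt_of_lt_of_le one_pos hE1
    have hexp : Real.exp (D * h * (n + 1 : ℕ)) = E * Real.exp (D * h) := by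
      rw [hE, ← Real.exp_add]
      push_cast
      ring_nf
    have hstep : 1 + D * h ≤ Real.exp (D * h) := by
      have := Real.add_one_le_exp (D * h); linarith
    have hstep1 : (1:ℝ) ≤ Real.exp (D * h) := Real.one_le_exp (by positivity)
    set F := E * Real.exp (D * h) with hF
    have hF1 : (1:ℝ) ≤ F := hE1.trans (le_mul_of_one_le_right hE0.le hstep1)
    have hEF : E ≤ F := le_mul_of_one_le_right hE0.le hstep1
    have htri : ‖e (n + 1)‖ ≤ ‖e n‖ + ‖e (n + 1) - e n‖ := by
      have := norm_add_le (e n) (e (n + 1) - e n)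
      simpa using this
    have hDd : c / c₁ * D = 2 * c / (1 - β) := by
      rw [hD]; field_simp
    have part1F : ‖e (n + 1)‖ ≤ c / c₁ * F * h ^ 2 := by
      calc ‖e (n + 1)‖ ≤ ‖e n‖ + ‖e (n + 1) - e n‖ := htri
        _ ≤ c / c₁ * E * h ^ 2 + c / c₁ * D * E * h ^ 3 := by rw [hDd]; linarith
        _ = c / c₁ * (E * (1 + D * h)) * h ^ 2 := by ring
        _ ≤ c / c₁ * F * h ^ 2 := by
            rw [hF]
            have : E * (1 + D * h) ≤ E * Real.exp (D * h) := by
              apply mul_le_mul_of_nonneg_left hstep hE0.le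
            have hcc : (0:ℝ) ≤ c / c₁ := by positivity
            exact mul_le_mul_of_nonneg_right
              (mul_le_mul_of_nonneg_left this hcc) (by positivity)
    have part1 : ‖e (n + 1)‖ ≤ c / c₁ * Real.exp (D * h * (n + 1 : ℕ)) * h ^ 2 := by
      rw [hexp]; exact part1F
    refine ⟨part1, ?_⟩
    have hr := hrec (n + 1) (by omega)
    simp only [Nat.add_sub_cancel] at hr
    rw [hexp]
    have hβd : β * (2 * c / (1 - β)) + 2 * c = 2 * c / (1 - β) := by
      field_simp; ring
    calc ‖e (n + 1 + 1) - e (n + 1)‖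
        ≤ β * ‖e (n + 1) - e n‖ + h * c₁ * ‖e (n + 1)‖ + c * h ^ 3 := hr
      _ ≤ β * ((2 * c / (1 - β)) * E * h ^ 3)
            + h * c₁ * (c / c₁ * F * h ^ 2) + c * h ^ 3 := by gcongr
      _ = (β * (2 * c / (1 - β)) * E + c * F + c) * h ^ 3 := by
          field_simp
      _ ≤ (β * (2 * c / (1 - β)) * F + c * F + c * F) * h ^ 3 := by
          have h0 : 0 ≤ β * (2 * c / (1 - β)) := by positivity
          have h1 : β * (2 * c / (1 - β)) * E ≤ β * (2 * c / (1 - β)) * F :=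
            mul_le_mul_of_nonneg_left hEF h0
          have h2 : c ≤ c * F := le_mul_of_one_le_right hc.le hF1
          apply mul_le_mul_of_nonneg_right _ hh3.le
          linarith
      _ = (β * (2 * c / (1 - β)) + 2 * c) * F * h ^ 3 := by ring
      _ = (2 * c / (1 - β)) * F * h ^ 3 := by rw [hβd]
end

section
/- Geometric weighted sum limit: for 0 ≤ β < 1, the quantity ((1-β^{n+1})/(1-β))² + 2 Σ_{k=0}^{n-1} β^{n-k} ((1-β^{k+1})/(1-β))² converges to (1+β)/(1-β)³ as n → ∞. -/
/-!
Reversing the order of summation, the weighted sum is `∑_{j<n} β^(j+1) a_{n-1-j}` with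
`a_k = ((1 - β^(k+1))/(1 - β))²`. Since `a_k → (1 - β)⁻²` and the weights `β^(j+1)` are summable
with sum `β/(1 - β)`, dominated convergence for series (Tannery's theorem) gives the limit
`(1 - β)⁻² + 2β/(1 - β)³ = (1 + β)/(1 - β)³`.
-/

open Filter Finset Topology

theorem tendsto_sum_range_mul_sub_of_tendsto {R : Type*} [NormedRing R] [CompleteSpace R]
    {w a : ℕ → R} {L : R} (hw : Summable fun j => ‖w j‖) (ha : Tendsto a atTop (𝓝 L)) :
    Tendsto (fun n => ∑ j ∈ range n, w j * a (n - 1 - j)) atTop (𝓝 ((∑' j, w j) * L)) := by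
  obtain ⟨C, hC⟩ := ha.norm.bddAbove_range
  have ha_le : ∀ k, ‖a k‖ ≤ C := fun k => hC ⟨k, rfl⟩
  rw [← hw.of_norm.tsum_mul_right]
  refine (tendsto_tsum_of_dominated_convergence (f := fun n => (range n : Set ℕ).indicator
    fun j => w j * a (n - 1 - j)) (hw.mul_right C) (fun j => ?_) ?_).congr
    fun n => (sum_eq_tsum_indicator _ _).symm
  · have ha_shift : Tendsto (fun n => a (n - 1 - j)) atTop (𝓝 L) := by
      simpa only [Nat.sub_sub, Function.comp_def] using ha.comp (tendsto_sub_atTop_nat (1 + j))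
    refine (ha_shift.const_mul (w j)).congr' ?_
    filter_upwards [eventually_gt_atTop j] with n hn
    simp [hn]
  · refine Eventually.of_forall fun n j => ?_
    by_cases hj : j < n
    · simpa [hj] using (norm_mul_le _ _).trans (by gcongr; exact ha_le _)
    · simpa [hj] using mul_nonneg (norm_nonneg (w j)) ((norm_nonneg _).trans (ha_le 0))

theorem sum_range_pow_sub_mul {R : Type*} [CommSemiring R] (x : R) (a : ℕ → R) (n : ℕ) :
    ∑ k ∈ range n, x ^ (n - k) * a k = ∑ j ∈ range n, x ^ (j + 1) * a (n - 1 - j) := by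
  rw [← sum_range_reflect]
  refine sum_congr rfl fun j hj => ?_
  rw [mem_range] at hj
  rw [show n - (n - 1 - j) = j + 1 by omega]

/-- Geometric weighted sum limit: for `0 ≤ β < 1`,
`((1-β^(n+1))/(1-β))² + 2 ∑_{k=0}^{n-1} β^(n-k) ((1-β^(k+1))/(1-β))²`
converges to `(1+β)/(1-β)³` as `n → ∞`. -/
theorem geometric_weighted_sum_limit (β : ℝ) (hβ0 : 0 ≤ β) (hβ1 : β < 1) :
    Tendsto (fun n : ℕ =>
        ((1 - β ^ (n + 1)) / (1 - β)) ^ 2 +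
          2 * ∑ k ∈ Finset.range n, β ^ (n - k) * ((1 - β ^ (k + 1)) / (1 - β)) ^ 2)
      atTop (nhds ((1 + β) / (1 - β) ^ 3)) := by
  have hpow : Tendsto (fun k : ℕ => β ^ (k + 1)) atTop (𝓝 0) :=
    (tendsto_pow_atTop_nhds_zero_of_lt_one hβ0 hβ1).comp (tendsto_add_atTop_nat 1)
  have ha : Tendsto (fun k : ℕ => ((1 - β ^ (k + 1)) / (1 - β)) ^ 2) atTop
      (𝓝 (((1 - 0) / (1 - β)) ^ 2)) :=
    ((tendsto_const_nhds.sub hpow).div_const _).pow 2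
  have hw : Summable fun j : ℕ => ‖β ^ (j + 1)‖ := by
    simpa [abs_of_nonneg hβ0, pow_succ] using
      (summable_geometric_of_lt_one hβ0 hβ1).mul_right β
  have hw_sum : ∑' j : ℕ, β ^ (j + 1) = β / (1 - β) := by
    simp only [pow_succ, tsum_mul_right, tsum_geometric_of_lt_one hβ0 hβ1]
    ring
  simp_rw [sum_range_pow_sub_mul]
  convert ha.add ((tendsto_sum_range_mul_sub_of_tendsto hw ha).const_mul 2) using 2
  rw [hw_sum]
  field_simp [(sub_pos.2 hβ1).ne']
  ring
end

section
/- In the full-batch limit case, the modified loss for gradient descent with momentum converges (as n → ∞) to Ê(x) = E(x) + ((1+β)h/(4(1-β)²)) ‖∇E(x)‖², up to the overall factor 1/(1-β); i.e., (1-β) Ê_n(x) → E(x) + ((1+β)h/(4(1-β)²))‖∇E(x)‖² pointwise. -/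
/-!
Since `G n = ((1 - β ^ (n + 1)) / (1 - β)) • E`, every term of `(1 - β) Ê_n(x)` is an explicit
function of `β ^ n` and `n β ^ n` times `E x` or `‖∇E(x)‖²`. The only non-trivial piece is the
memory sum `∑_{k<n} β^(n-k) (1 - β^(k+1))²`, which has a closed form and tends to `β / (1 - β)`;
as `β ^ n → 0` and `n β ^ n → 0` the limit follows.
-/

open Filter Finset Topology

theorem gradient_const_mul_field {F : Type*} [NormedAddCommGroup F] [InnerProductSpace ℝ F]
    [CompleteSpace F] (c : ℝ) (f : F → ℝ) (x : F) :
    gradient (fun y => c * f y) x = c • gradient f x := by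
  have hfun : (fun y => c * f y) = c • f := rfl
  rw [gradient, hfun, fderiv_const_smul_field, Pi.smul_apply, map_smul, gradient]

theorem one_sub_mul_sum_pow_sub_mul_one_sub_pow_sq (β : ℝ) (n : ℕ) :
    (1 - β) * ∑ k ∈ range n, β ^ (n - k) * (1 - β ^ (k + 1)) ^ 2
      = β * (1 - β ^ n) * (1 + β ^ (n + 1)) - 2 * (1 - β) * β * (n * β ^ n) := by
  induction n with
  | zero => simp
  | succ n ih =>
    have hshift : ∑ k ∈ range (n + 1), β ^ (n + 1 - k) * (1 - β ^ (k + 1)) ^ 2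
        = β * (∑ k ∈ range n, β ^ (n - k) * (1 - β ^ (k + 1)) ^ 2 + (1 - β ^ (n + 1)) ^ 2) := by
      rw [sum_range_succ, mul_add, mul_sum, Nat.add_sub_cancel_left, pow_one]
      congr 1
      refine sum_congr rfl fun k hk => ?_
      rw [Nat.succ_sub (mem_range.mp hk).le, pow_succ]
      ring
    rw [hshift]
    push_cast
    linear_combination β * ih

theorem tendsto_sum_pow_sub_mul_one_sub_pow_sq {β : ℝ} (hβ0 : 0 ≤ β) (hβ1 : β < 1) :
    Tendsto (fun n => ∑ k ∈ range n, β ^ (n - k) * (1 - β ^ (k + 1)) ^ 2) atTop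
      (𝓝 (β / (1 - β))) := by
  have hne : 1 - β ≠ 0 := by linarith
  have hpow := tendsto_pow_atTop_nhds_zero_of_lt_one hβ0 hβ1
  have hlin := tendsto_self_mul_const_pow_of_lt_one hβ0 hβ1
  have hclosed : Tendsto (fun n : ℕ => (β * (1 - β ^ n) * (1 + β * β ^ n)
      - 2 * (1 - β) * β * (n * β ^ n)) / (1 - β)) atTop
      (𝓝 ((β * (1 - 0) * (1 + β * 0) - 2 * (1 - β) * β * 0) / (1 - β))) := by
    refine ((((tendsto_const_nhds.sub hpow).const_mul β).mul
      (tendsto_const_nhds.add (hpow.const_mul β))).sub (hlin.const_mul _)).div_const _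
  convert hclosed using 2 with n
  · rw [eq_div_iff hne, mul_comm, one_sub_mul_sum_pow_sub_mul_one_sub_pow_sq, pow_succ']
  · simp

theorem full_batch_modified_loss_limit_general {d : ℕ} (β h : ℝ)
    (hβ0 : 0 ≤ β) (hβ1 : β < 1)
    (E : EuclideanSpace ℝ (Fin d) → ℝ)
    (G : ℕ → EuclideanSpace ℝ (Fin d) → ℝ)
    (hG : ∀ n x, G n x = ((1 - β ^ (n + 1)) / (1 - β)) * E x) :
    ∀ x : EuclideanSpace ℝ (Fin d),
      Tendsto (fun n : ℕ => (1 - β) *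
          (G n x + (h / 4) * (‖gradient (G n) x‖ ^ 2 +
            2 * ∑ k ∈ Finset.range n, β ^ (n - k) * ‖gradient (G k) x‖ ^ 2)))
        atTop
        (nhds (E x + ((1 + β) * h / (4 * (1 - β) ^ 2)) * ‖gradient E x‖ ^ 2)) := by
  intro x
  have hne : 1 - β ≠ 0 := by linarith
  set A := ‖gradient E x‖ ^ 2
  set S := fun n => ∑ k ∈ range n, β ^ (n - k) * (1 - β ^ (k + 1)) ^ 2
  have hgrad (k : ℕ) : ‖gradient (G k) x‖ ^ 2 = ((1 - β ^ (k + 1)) / (1 - β)) ^ 2 * A := by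
    rw [show G k = _ from funext (hG k), gradient_const_mul_field, norm_smul, mul_pow,
      Real.norm_eq_abs, sq_abs]
  have hseq (n : ℕ) : (1 - β) * (G n x + (h / 4) * (‖gradient (G n) x‖ ^ 2 +
        2 * ∑ k ∈ range n, β ^ (n - k) * ‖gradient (G k) x‖ ^ 2))
      = (1 - β ^ (n + 1)) * E x + h / 4 * ((1 - β ^ (n + 1)) ^ 2 + 2 * S n) / (1 - β) * A := by
    simp only [hG, hgrad, S, div_pow, ← mul_assoc, mul_div_assoc', ← sum_mul, ← sum_div]
    field_simp
  have hq : Tendsto (fun n => 1 - β ^ (n + 1)) atTop (𝓝 (1 - 0)) :=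
    tendsto_const_nhds.sub ((tendsto_pow_atTop_nhds_zero_of_lt_one hβ0 hβ1).comp
      (tendsto_add_atTop_nat 1))
  have hlim := (hq.mul_const (E x)).add (((((hq.pow 2).add
    ((tendsto_sum_pow_sub_mul_one_sub_pow_sq hβ0 hβ1).const_mul 2)).const_mul (h / 4)).div_const
    (1 - β)).mul_const A)
  convert hlim using 2 with n
  · exact hseq n
  · field_simp
    ring

/-- In the full-batch case (`E_k = E`), the rescaled modified loss `(1-β) Ê_n(x)`
converges pointwise, as `n → ∞`, to `E(x) + ((1+β)h/(4(1-β)²)) ‖∇E(x)‖²`. -/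
theorem full_batch_modified_loss_limit {d : ℕ} (β h : ℝ)
    (hβ0 : 0 ≤ β) (hβ1 : β < 1) (hh : 0 < h)
    (E : EuclideanSpace ℝ (Fin d) → ℝ) (hE : Differentiable ℝ E)
    (G : ℕ → EuclideanSpace ℝ (Fin d) → ℝ)
    (hG : ∀ n x, G n x = ((1 - β ^ (n + 1)) / (1 - β)) * E x) :
    ∀ x : EuclideanSpace ℝ (Fin d),
      Tendsto (fun n : ℕ => (1 - β) *
          (G n x + (h / 4) * (‖gradient (G n) x‖ ^ 2 +
            2 * ∑ k ∈ Finset.range n, β ^ (n - k) * ‖gradient (G k) x‖ ^ 2)))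
        atTop
        (nhds (E x + ((1 + β) * h / (4 * (1 - β) ^ 2)) * ‖gradient E x‖ ^ 2)) :=
  full_batch_modified_loss_limit_general β h hβ0 hβ1 E G hG
end
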